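/- The one-to-one HRC instance A admits no stable matching. -/

import Mathlib

/-- A one-to-one HRC instance: residents are partitioned into single residents and
ordered couples; all hospitals have capacity 1. -/
structure HRC1 (R H : Type) where
  singles : List R
  couples : List (R × R)
  singlePref : R → List H
  couplePref : R × R → List (H × H)
  hospPref : H → List R

namespace HRC1

/-- `x` precedes `y` on the strict preference list `l`. -/
def Prefers {α : Type} [DecidableEq α] (l : List α) (x y : α) : Prop :=
  x ∈ l ∧ y ∈ l ∧ l.idxOf x < l.idxOf y

variable {R H : Type} [DecidableEq R] [DecidableEq H]

/-- `M` is a matching of the instance `I`. -/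
def IsMatching (I : HRC1 R H) (M : R → Option H) : Prop :=
  (∀ r₁ r₂ h, M r₁ = some h → M r₂ = some h → r₁ = r₂) ∧
  (∀ r ∈ I.singles, ∀ h, M r = some h → h ∈ I.singlePref r) ∧
  (∀ c ∈ I.couples,
    (M c.1 = none ∧ M c.2 = none) ∨
    ∃ hp ∈ I.couplePref c, M c.1 = some hp.1 ∧ M c.2 = some hp.2) ∧
  (∀ r, (M r).isSome → r ∈ I.singles ∨ ∃ c ∈ I.couples, r = c.1 ∨ r = c.2)

/-- Hospital `h` is unmatched in `M`. -/
def HospFree (M : R → Option H) (h : H) : Prop := ∀ r, M r ≠ some h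

/-- Hospital `h` is unmatched in `M`, or prefers `r` to its current assignee. -/
def HospOpenFor (I : HRC1 R H) (M : R → Option H) (h : H) (r : R) : Prop :=
  HospFree M h ∨ ∃ r', M r' = some h ∧ Prefers (I.hospPref h) r r'

/-- Blocking pair consisting of a single resident `r` and a hospital `h`. -/
def BlockSingle (I : HRC1 R H) (M : R → Option H) (r : R) (h : H) : Prop :=
  r ∈ I.singles ∧ h ∈ I.singlePref r ∧
  (M r = none ∨ ∃ h', M r = some h' ∧ Prefers (I.singlePref r) h h') ∧
  I.HospOpenFor M h r

/-- Blocking pair consisting of a couple `c` and a pair of hospitals `hp` on its joint list. -/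
def BlockCouple (I : HRC1 R H) (M : R → Option H) (c : R × R) (hp : H × H) : Prop :=
  c ∈ I.couples ∧ hp ∈ I.couplePref c ∧
  ((M c.1 = none ∧ M c.2 = none) ∨
    ∃ hp' ∈ I.couplePref c, M c.1 = some hp'.1 ∧ M c.2 = some hp'.2 ∧
      Prefers (I.couplePref c) hp hp') ∧
  (M c.1 = some hp.1 ∨ I.HospOpenFor M hp.1 c.1) ∧
  (M c.2 = some hp.2 ∨ I.HospOpenFor M hp.2 c.2)

/-- `M` is a stable matching of the instance `I`. -/
def Stable (I : HRC1 R H) (M : R → Option H) : Prop :=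
  I.IsMatching M ∧ (∀ r h, ¬ I.BlockSingle M r h) ∧ (∀ c hp, ¬ I.BlockCouple M c hp)

end HRC1

/-- Residents of the instance `A`. -/
inductive RA | a | b | c
deriving DecidableEq

/-- Hospitals of the instance `A`. -/
inductive HA | z1 | z2
deriving DecidableEq

/-- The instance `A`: couple `(a,b)` with joint list `(z₁,z₂)`; single resident `c`
with list `z₁, z₂`; `z₁`'s list is `a, c`; `z₂`'s list is `c, b`. -/
def instA : HRC1 RA HA where
  singles := [RA.c]
  couples := [(RA.a, RA.b)]
  singlePref := fun r => match r with
    | RA.c => [HA.z1, HA.z2]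
    | _ => []
  couplePref := fun c => if c = (RA.a, RA.b) then [(HA.z1, HA.z2)] else []
  hospPref := fun h => match h with
    | HA.z1 => [RA.a, RA.c]
    | HA.z2 => [RA.c, RA.b]

/-!
The couple `(a, b)` is either unmatched or sits at `(z₁, z₂)`. In the latter case `c` is
unmatched and `z₂` prefers `c` to `b`. If the couple is unmatched, then `z₂` is free and `c`
either holds `z₁`, where `z₁` ranks it below `a`, so the couple blocks with `(z₁, z₂)`, or
`z₁` is free and blocks with `c`.
-/

theorem HRC1.prefers_pair {α : Type} [DecidableEq α] {x y : α} (h : x ≠ y) :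
    HRC1.Prefers [x, y] x y := by
  simp [HRC1.Prefers, h]

section InstanceA

open RA HA

variable {M : RA → Option HA}

theorem instA_couple_unmatched_or_assigned (hM : instA.IsMatching M) :
    (M a = none ∧ M b = none) ∨ (M a = some z1 ∧ M b = some z2) := by
  simpa [instA] using hM.2.2.1 (a, b) (by simp [instA])

theorem instA_single_unmatched_of_couple_assigned (hM : instA.IsMatching M)
    (ha : M a = some z1) (hb : M b = some z2) : M c = none := by
  rcases hc : M c with _ | _ | _
  · rfl
  · exact absurd (hM.1 c a z1 hc ha) (by decide)
  · exact absurd (hM.1 c b z2 hc hb) (by decide)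

theorem instA_blockSingle_c_z2 (hb : M b = some z2) (hc : M c = none) :
    instA.BlockSingle M c z2 :=
  ⟨by decide, by decide, Or.inl hc, Or.inr ⟨b, hb, HRC1.prefers_pair (by decide)⟩⟩

theorem instA_blockSingle_c_z1 (ha : M a = none) (hb : M b = none) (hc : M c ≠ some z1) :
    instA.BlockSingle M c z1 := by
  have hfree : HRC1.HospFree M z1 := fun r => by cases r <;> simp [ha, hb, hc]
  refine ⟨by decide, by decide, ?_, Or.inl hfree⟩
  rcases hc' : M c with _ | _ | _
  · exact Or.inl rfl
  · exact absurd hc' hc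
  · exact Or.inr ⟨z2, rfl, HRC1.prefers_pair (by decide)⟩

theorem instA_blockCouple_ab_z1z2 (ha : M a = none) (hb : M b = none) (hc : M c = some z1) :
    instA.BlockCouple M (a, b) (z1, z2) := by
  have hfree : HRC1.HospFree M z2 := fun r => by cases r <;> simp [ha, hb, hc]
  exact ⟨by decide, by decide, Or.inl ⟨ha, hb⟩,
    Or.inr (Or.inr ⟨c, hc, HRC1.prefers_pair (by decide)⟩), Or.inr (Or.inl hfree)⟩

end InstanceA

/-- The instance `A` admits no stable matching. -/
theorem instA_admits_no_stable_matching :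
    ¬ ∃ M : RA → Option HA, instA.Stable M := by
  rintro ⟨M, hM, hsingle, hcouple⟩
  rcases instA_couple_unmatched_or_assigned hM with ⟨ha, hb⟩ | ⟨ha, hb⟩
  · by_cases hc : M RA.c = some HA.z1
    · exact hcouple _ _ (instA_blockCouple_ab_z1z2 ha hb hc)
    · exact hsingle _ _ (instA_blockSingle_c_z1 ha hb hc)
  · exact hsingle _ _
      (instA_blockSingle_c_z2 hb (instA_single_unmatched_of_couple_assigned hM ha hb))
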